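/- arXiv:2504.18866 — 3 statements merged into one kernel-verified Lean document; each statement's English description precedes it below -/
import Mathlib

section
/- Let K < 0 and n, m ∈ ℕ. Let x ∈ ℝ^{n+1} be a point of the Lorentz model L_K^n (i.e. ⟨x,x⟩_L = 1/K and x₀ > 0), let W ∈ ℝ^{m×(n+1)} and v ∈ ℝ^{n+1} with vᵀx ≠ 0, and set M = [vᵀ; W] ∈ ℝ^{(m+1)×(n+1)}. Define f_x(M) := [ (√(‖Wx‖² − 1/K)/(vᵀx)) vᵀ ; W ]. Then f_x(M)x ∈ L_K^m, i.e. ⟨f_x(M)x, f_x(M)x⟩_L = 1/K and the 0-th coordinate of f_x(M)x is positive. -/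
noncomputable section

/-- Lorentzian inner product on ℝ^{n+1}: ⟨x,y⟩_L = -x₀y₀ + Σ_{i=1}^n xᵢyᵢ. -/
def lprod {n : ℕ} (x y : Fin (n+1) → ℝ) : ℝ :=
  -(x 0 * y 0) + ∑ i : Fin n, x i.succ * y i.succ

/-- Membership in the Lorentz model L_K^n: ⟨x,x⟩_L = 1/K and x₀ > 0. -/
def onLorentz {n : ℕ} (K : ℝ) (x : Fin (n+1) → ℝ) : Prop :=
  lprod x x = 1 / K ∧ 0 < x 0

/-- arcosh t = log (t + √(t² − 1)). -/
def arcosh (t : ℝ) : ℝ := Real.log (t + Real.sqrt (t ^ 2 - 1))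
/-- Theorem 1 of the paper: for x on the Lorentz model L_K^n, matrix W and vector v
with vᵀx ≠ 0, the point f_x(M)x lies on L_K^m. -/
theorem fxM_maps_to_lorentz {n m : ℕ} (K : ℝ) (hK : K < 0)
    (x : Fin (n+1) → ℝ) (hx : onLorentz K x)
    (W : Matrix (Fin m) (Fin (n+1)) ℝ) (v : Fin (n+1) → ℝ)
    (hv : ∑ i, v i * x i ≠ 0) :
    let c : ℝ := Real.sqrt ((∑ i, (W.mulVec x i) ^ 2) - 1 / K) / (∑ i, v i * x i)
    let fxM : Fin (m+1) → (Fin (n+1) → ℝ) := Fin.cons (c • v) (fun i => W i)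
    let y : Fin (m+1) → ℝ := fun i => ∑ j, fxM i j * x j
    onLorentz K y := by
  intro c fxM y
  set A : ℝ := ∑ i, (W.mulVec x i) ^ 2 with hA
  set s : ℝ := ∑ i, v i * x i with hs
  have hApos : 0 ≤ A := Finset.sum_nonneg fun i _ => sq_nonneg _
  have hKneg : 1 / K < 0 := one_div_neg.2 hK
  have hAK : 0 < A - 1 / K := by linarith
  have hy0 : y 0 = Real.sqrt (A - 1 / K) := by
    simp only [y, fxM, Fin.cons_zero, Pi.smul_apply, smul_eq_mul]
    have : ∑ j, c * v j * x j = c * s := by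
      rw [hs, Finset.mul_sum]; exact Finset.sum_congr rfl fun j _ => by ring
    rw [this]
    exact div_mul_cancel₀ (Real.sqrt (A - 1 / K)) hv
  have hysucc : ∀ i : Fin m, y i.succ = W.mulVec x i := by
    intro i
    simp only [y, fxM, Fin.cons_succ]
    simp [Matrix.mulVec, dotProduct, mul_comm]
  have hy0pos : 0 < y 0 := by
    rw [hy0]; exact Real.sqrt_pos.2 hAK
  refine ⟨?_, hy0pos⟩
  unfold lprod
  rw [hy0]
  have : ∑ i : Fin m, y i.succ * y i.succ = A := by
    rw [hA]
    exact Finset.sum_congr rfl fun i _ => by rw [hysucc i]; ring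
  rw [this, Real.mul_self_sqrt hAK.le]
  ring
end
end

section
/- Let K < 0 and n ∈ ℕ, and let x, y be points on the Lorentz model L_K^n. Set w := y − K⟨x,y⟩_L · x. Then ⟨w,w⟩_L = (1 − (K⟨x,y⟩_L)²)/K ≥ 0, and ⟨w,w⟩_L > 0 if and only if x ≠ y. -/
noncomputable section

lemma lprod_sub_smul {n : ℕ} (x y : Fin (n+1) → ℝ) (t : ℝ) :
    lprod (y - t • x) (y - t • x) = lprod y y - 2*t*lprod x y + t^2 * lprod x x := by
  simp only [lprod, Pi.sub_apply, Pi.smul_apply, smul_eq_mul]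
  rw [show (∑ i : Fin n, (y i.succ - t * x i.succ) * (y i.succ - t * x i.succ))
      = (∑ i : Fin n, y i.succ * y i.succ) - 2*t*(∑ i : Fin n, x i.succ * y i.succ)
        + t^2 * (∑ i : Fin n, x i.succ * x i.succ) by
    rw [Finset.mul_sum, Finset.mul_sum, ← Finset.sum_sub_distrib, ← Finset.sum_add_distrib]
    exact Finset.sum_congr rfl fun i _ => by ring]
  ring

lemma lprod_left_sub_smul {n : ℕ} (x y : Fin (n+1) → ℝ) (t : ℝ) :
    lprod x (y - t • x) = lprod x y - t * lprod x x := by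
  simp only [lprod, Pi.sub_apply, Pi.smul_apply, smul_eq_mul]
  rw [show (∑ i : Fin n, x i.succ * (y i.succ - t * x i.succ))
      = (∑ i : Fin n, x i.succ * y i.succ) - t * (∑ i : Fin n, x i.succ * x i.succ) by
    rw [Finset.mul_sum, ← Finset.sum_sub_distrib]
    exact Finset.sum_congr rfl fun i _ => by ring]
  ring

/-- Orthogonal complement of a timelike vector is spacelike. -/
lemma timelike_orth {n : ℕ} (x w : Fin (n+1) → ℝ) (hx : lprod x x < 0) (h0 : 0 < x 0)
    (horth : lprod x w = 0) : 0 ≤ lprod w w ∧ (lprod w w = 0 → w = 0) := by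
  set A := ∑ i : Fin n, x i.succ * x i.succ with hA
  set B := ∑ i : Fin n, x i.succ * w i.succ with hB
  set C := ∑ i : Fin n, w i.succ * w i.succ with hC
  have hxx : -(x 0 * x 0) + A < 0 := hx
  have hB0 : -(x 0 * w 0) + B = 0 := horth
  have hww : lprod w w = -(w 0 * w 0) + C := rfl
  have hCS : B ^ 2 ≤ A * C := by
    have := Finset.sum_mul_sq_le_sq_mul_sq Finset.univ (fun i : Fin n => x i.succ)
      (fun i : Fin n => w i.succ)
    simpa [hA, hB, hC, sq] using this
  have hCnn : 0 ≤ C := Finset.sum_nonneg fun i _ => mul_self_nonneg _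
  have hw0 : w 0 = B / x 0 := by field_simp; linarith
  have key : lprod w w * (x 0 * x 0) = C * (x 0 * x 0) - B ^ 2 := by
    rw [hww, hw0]; field_simp; ring
  have h1 : 0 ≤ lprod w w * (x 0 * x 0) := by
    nlinarith [mul_nonneg hCnn (show (0:ℝ) ≤ x 0 * x 0 - A by nlinarith)]
  constructor
  · nlinarith [h1, mul_pos h0 h0]
  · intro hz
    have hCz : C = 0 := by
      have hle : C ≤ 0 := by
        by_contra hc
        push_neg at hc
        nlinarith [mul_pos hc (show (0:ℝ) < x 0 * x 0 - A by nlinarith)]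
      linarith
    have hall : ∀ i : Fin n, w i.succ = 0 := by
      intro i
      have := (Finset.sum_eq_zero_iff_of_nonneg
        (fun j _ => mul_self_nonneg (w j.succ))).mp hCz i (Finset.mem_univ i)
      exact mul_self_eq_zero.mp this
    have hBz : B = 0 := Finset.sum_eq_zero fun i _ => by rw [hall i]; ring
    have hw0z : w 0 = 0 := by rw [hw0, hBz]; simp
    funext i
    refine Fin.cases ?_ ?_ i
    · exact hw0z
    · exact hall

/-- For x, y ∈ L_K^n and w = y − K⟨x,y⟩_L·x, one has
⟨w,w⟩_L = (1 − (K⟨x,y⟩_L)²)/K ≥ 0, and ⟨w,w⟩_L > 0 iff x ≠ y. -/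
theorem log_direction_spacelike {n : ℕ} (K : ℝ) (hK : K < 0)
    (x y : Fin (n+1) → ℝ) (hx : onLorentz K x) (hy : onLorentz K y) :
    let w : Fin (n+1) → ℝ := y - (K * lprod x y) • x
    lprod w w = (1 - (K * lprod x y) ^ 2) / K ∧
      0 ≤ lprod w w ∧ (0 < lprod w w ↔ x ≠ y) := by
  intro w
  obtain ⟨hxx, hx0⟩ := hx
  obtain ⟨hyy, hy0⟩ := hy
  have hK0 : K ≠ 0 := ne_of_lt hK
  set t := K * lprod x y with ht
  have hval : lprod w w = (1 - t ^ 2) / K := by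
    have := lprod_sub_smul x y t
    rw [show w = y - t • x from rfl, this, hxx, hyy]
    have hxy : lprod x y = t / K := by rw [ht]; field_simp
    rw [hxy]; field_simp; ring
  have horth : lprod x w = 0 := by
    rw [show w = y - t • x from rfl, lprod_left_sub_smul, hxx, ht]
    field_simp
    ring
  have hxneg : lprod x x < 0 := by
    rw [hxx]; exact div_neg_of_pos_of_neg one_pos hK
  obtain ⟨hnn, heq⟩ := timelike_orth x w hxneg hx0 horth
  refine ⟨hval, hnn, ⟨?_, ?_⟩⟩
  · intro hpos hxy
    subst hxy
    have ht1 : t = 1 := by rw [ht, hxx]; field_simp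
    rw [hval, ht1] at hpos
    simp at hpos
  · intro hne
    rcases lt_or_eq_of_le hnn with h | h
    · exact h
    · exfalso
      have hwz : w = 0 := heq h.symm
      have hyx : y = t • x := by
        funext i
        have h : (y - t • x) i = 0 := congrFun hwz i
        simp only [Pi.sub_apply, Pi.smul_apply, smul_eq_mul, sub_eq_zero] at h
        simpa using h
      -- lprod y y = t^2 lprod x x
      have hyy2 : lprod y y = t ^ 2 * lprod x x := by
        rw [hyx]
        simp only [lprod, Pi.smul_apply, smul_eq_mul]
        rw [show (∑ i : Fin n, t * x i.succ * (t * x i.succ))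
            = t^2 * ∑ i : Fin n, x i.succ * x i.succ by
          rw [Finset.mul_sum]; exact Finset.sum_congr rfl fun i _ => by ring]
        ring
      rw [hyy, hxx] at hyy2
      have ht2 : t ^ 2 = 1 := by field_simp at hyy2; nlinarith
      have hty : y 0 = t * x 0 := by rw [hyx]; simp
      have htpos : 0 < t := by
        by_contra htn
        push_neg at htn
        nlinarith
      have ht1 : t = 1 := by nlinarith
      apply hne
      funext i
      rw [hyx, ht1]; simp
end
end

section
/- Let K < 0, n ∈ ℕ, and m ≥ 1. Let y_1, …, y_m be points on the Lorentz model L_K^n and let a_1, …, a_m ≥ 0 with Σ_j a_j > 0. Then the combination s := Σ_j a_j y_j satisfies ⟨s,s⟩_L ≤ (Σ_j a_j)²/K < 0 and s₀ ≥ (Σ_j a_j)·√(−1/K) > 0; in particular s is timelike with positive 0-th coordinate. -/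
noncomputable section

/-- Reverse Cauchy–Schwarz: two points on the hyperboloid have Lorentz product ≤ 1/K. -/
lemma lprod_le_of_onLorentz {n : ℕ} (K : ℝ) (hK : K < 0) (x z : Fin (n+1) → ℝ)
    (hx : onLorentz K x) (hz : onLorentz K z) : lprod x z ≤ 1 / K := by
  obtain ⟨hx1, hx0⟩ := hx
  obtain ⟨hz1, hz0⟩ := hz
  have hKinv : 1 / K < 0 := one_div_neg.mpr hK
  set c : ℝ := -(1/K) with hc
  have hcpos : 0 < c := by simp only [hc]; linarith
  set A : ℝ := ∑ i : Fin n, x i.succ ^ 2 with hA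
  set B : ℝ := ∑ i : Fin n, z i.succ ^ 2 with hB
  have hA0 : 0 ≤ A := Finset.sum_nonneg fun i _ => sq_nonneg _
  have hB0 : 0 ≤ B := Finset.sum_nonneg fun i _ => sq_nonneg _
  have hxA : x 0 ^ 2 = A + c := by
    have h : ∑ i : Fin n, x i.succ * x i.succ = A := by simp [hA, sq]
    simp only [lprod] at hx1
    rw [h] at hx1; rw [sq]; simp only [hc]; linarith
  have hzB : z 0 ^ 2 = B + c := by
    have h : ∑ i : Fin n, z i.succ * z i.succ = B := by simp [hB, sq]
    simp only [lprod] at hz1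
    rw [h] at hz1; rw [sq]; simp only [hc]; linarith
  set S : ℝ := ∑ i : Fin n, x i.succ * z i.succ with hS
  have hCS : S ^ 2 ≤ A * B := Finset.sum_mul_sq_le_sq_mul_sq _ _ _
  set u : ℝ := Real.sqrt A with hu
  set v : ℝ := Real.sqrt B with hv
  have hu2 : u ^ 2 = A := Real.sq_sqrt hA0
  have hv2 : v ^ 2 = B := Real.sq_sqrt hB0
  have hu0 : 0 ≤ u := Real.sqrt_nonneg _
  have hv0 : 0 ≤ v := Real.sqrt_nonneg _
  have huv0 : 0 ≤ u * v := mul_nonneg hu0 hv0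
  have hSuv : S ≤ u * v := by nlinarith [hCS, hu2, hv2, huv0]
  have hprod : (x 0 * z 0) ^ 2 = (u ^ 2 + c) * (v ^ 2 + c) := by
    rw [mul_pow, hxA, hzB, hu2, hv2]
  have hx0z0 : c + u * v ≤ x 0 * z 0 := by
    nlinarith [hprod, sq_nonneg (u - v), mul_pos hx0 hz0, hcpos, huv0]
  have heq : lprod x z = -(x 0 * z 0) + S := rfl
  have h1K : (1 : ℝ)/K = -c := by simp only [hc]; ring
  rw [heq, h1K]
  linarith

/-- The 0-th coordinate of a point on the hyperboloid is at least √(-1/K). -/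
lemma sqrt_le_zeroth_of_onLorentz {n : ℕ} (K : ℝ) (hK : K < 0) (x : Fin (n+1) → ℝ)
    (hx : onLorentz K x) : Real.sqrt (-1/K) ≤ x 0 := by
  obtain ⟨hx1, hx0⟩ := hx
  have hA0 : 0 ≤ ∑ i : Fin n, x i.succ * x i.succ :=
    Finset.sum_nonneg fun i _ => mul_self_nonneg _
  simp only [lprod] at hx1
  have h1 : -1/K ≤ x 0 ^ 2 := by
    have : (-1 : ℝ)/K = -(1/K) := by ring
    rw [this, sq]; linarith
  calc Real.sqrt (-1/K) ≤ Real.sqrt (x 0 ^ 2) := Real.sqrt_le_sqrt h1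
    _ = x 0 := by rw [Real.sqrt_sq hx0.le]

/-- Bilinearity of the Lorentz product over nonneg. combinations. -/
lemma lprod_sum_sum {n m : ℕ} (y : Fin m → (Fin (n+1) → ℝ)) (a : Fin m → ℝ) :
    lprod (∑ j, a j • y j) (∑ j, a j • y j) = ∑ j, ∑ k, a j * a k * lprod (y j) (y k) := by
  simp only [lprod, Finset.sum_apply, Pi.smul_apply, smul_eq_mul, Finset.sum_mul_sum,
    mul_add, mul_neg, Finset.mul_sum, Finset.sum_add_distrib, Finset.sum_neg_distrib]
  congr 1
  · congr 1
    refine Finset.sum_congr rfl fun j _ => ?_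
    rw [Finset.sum_mul]
    exact Finset.sum_congr rfl fun k _ => by ring
  · rw [Finset.sum_comm]
    refine Finset.sum_congr rfl fun j _ => ?_
    rw [Finset.sum_comm]
    refine Finset.sum_congr rfl fun k _ => ?_
    rw [Finset.sum_mul]
    exact Finset.sum_congr rfl fun i _ => by ring

/-- A nonnegative, not-all-zero combination of points on L_K^n is timelike with
positive 0-th coordinate, with the quantitative bounds stated in the paper. -/
theorem nonneg_combination_timelike {n m : ℕ} (hm : 1 ≤ m) (K : ℝ) (hK : K < 0)
    (y : Fin m → (Fin (n+1) → ℝ)) (hy : ∀ j, onLorentz K (y j))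
    (a : Fin m → ℝ) (ha : ∀ j, 0 ≤ a j) (hsum : 0 < ∑ j, a j) :
    let s : Fin (n+1) → ℝ := ∑ j, a j • y j
    lprod s s ≤ (∑ j, a j) ^ 2 / K ∧ (∑ j, a j) ^ 2 / K < 0 ∧
      (∑ j, a j) * Real.sqrt (-1 / K) ≤ s 0 ∧
      0 < (∑ j, a j) * Real.sqrt (-1 / K) ∧
      lprod s s < 0 ∧ 0 < s 0 := by
  intro s
  have hKinv : 1 / K < 0 := one_div_neg.mpr hK
  -- first bound
  have h1 : lprod s s ≤ (∑ j, a j) ^ 2 / K := by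
    have hbil : lprod s s = ∑ j, ∑ k, a j * a k * lprod (y j) (y k) := lprod_sum_sum y a
    have hrhs : (∑ j, a j) ^ 2 / K = ∑ j, ∑ k, a j * a k * (1 / K) := by
      rw [sq, Finset.sum_mul_sum]
      rw [Finset.sum_div]
      refine Finset.sum_congr rfl fun j _ => ?_
      rw [Finset.sum_div]
      refine Finset.sum_congr rfl fun k _ => ?_
      field_simp
    rw [hbil, hrhs]
    refine Finset.sum_le_sum fun j _ => Finset.sum_le_sum fun k _ => ?_
    exact mul_le_mul_of_nonneg_left
      (lprod_le_of_onLorentz K hK _ _ (hy j) (hy k)) (mul_nonneg (ha j) (ha k))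
  have h2 : (∑ j, a j) ^ 2 / K < 0 := div_neg_of_pos_of_neg (by positivity) hK
  have hsq : 0 < Real.sqrt (-1/K) := Real.sqrt_pos.mpr (by rw [div_pos_iff]; right; constructor <;> linarith)
  have h3 : (∑ j, a j) * Real.sqrt (-1/K) ≤ s 0 := by
    have hs0 : s 0 = ∑ j, a j * y j 0 := by simp [s, Finset.sum_apply]
    rw [hs0, Finset.sum_mul]
    refine Finset.sum_le_sum fun j _ => ?_
    exact mul_le_mul_of_nonneg_left (sqrt_le_zeroth_of_onLorentz K hK _ (hy j)) (ha j)
  have h4 : 0 < (∑ j, a j) * Real.sqrt (-1/K) := mul_pos hsum hsq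
  exact ⟨h1, h2, h3, h4, lt_of_le_of_lt h1 h2, lt_of_lt_of_le h4 h3⟩
end
end
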